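/- Let 𝒲 be a Whitney covering of a domain Ω ⊂ ℝ^d, let g ∈ L^1_loc(ℝ^d) be nonnegative, let r > 0 and η > 0. Then for every cube Q ∈ 𝒲 one has ∑_{S∈𝒲 : D(Q,S) > r} (∫_S g(x) dx) / D(Q,S)^{d+η} ≤ C r^{−η} inf_{y∈Q} Mg(y), with C depending only on d and η. -/

import Mathlib

open MeasureTheory Metric Set
open scoped ENNReal NNReal Topology Classical

noncomputable section

namespace CZ

/-- We model `ℝ^d` as `Fin d → ℝ` (so that sup-norm balls are cubes). -/
abbrev Euc (d : ℕ) := Fin d → ℝ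

variable {d : ℕ}

/-- The order `|α|` of a multiindex `α ∈ ℕ^d`. -/
def mdeg (α : Fin d → ℕ) : ℕ := ∑ i, α i

/-- Partial derivative in the `i`-th coordinate direction. -/
def pder (i : Fin d) (f : Euc d → ℝ) : Euc d → ℝ := fun x => fderiv ℝ f x (Pi.single i 1)

/-- Iterated partial derivative `D^α` for a multiindex `α`. -/
def mderiv (α : Fin d → ℕ) (f : Euc d → ℝ) : Euc d → ℝ :=
  (List.finRange d).foldr (fun i g => (pder i)^[α i] g) f

/-- `g` is the `α`-th distributional (weak) derivative of `f` on `U`. -/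
def IsWeakDeriv (U : Set (Euc d)) (α : Fin d → ℕ) (f g : Euc d → ℝ) : Prop :=
  ∀ φ : Euc d → ℝ, ContDiff ℝ (⊤ : ℕ∞) φ → HasCompactSupport φ → tsupport φ ⊆ U →
    ∫ x in U, f x * mderiv α φ x = (-1 : ℝ) ^ mdeg α * ∫ x in U, g x * φ x

/-- A choice of the `α`-th weak derivative of `f` on `U` (junk value `0` if none exists). -/
def weakDeriv (U : Set (Euc d)) (α : Fin d → ℕ) (f : Euc d → ℝ) : Euc d → ℝ :=
  if h : ∃ g, IsWeakDeriv U α f g then h.choose else 0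

/-- Membership in the Sobolev space `W^{n,p}(U)`. -/
def MemSobolev (n : ℕ) (p : ℝ≥0∞) (U : Set (Euc d)) (f : Euc d → ℝ) : Prop :=
  MemLp f p (volume.restrict U) ∧
  ∀ α : Fin d → ℕ, mdeg α ≤ n → ∃ g, IsWeakDeriv U α f g ∧ MemLp g p (volume.restrict U)

/-- The Sobolev norm `∑_{|α| ≤ n} ‖D^α f‖_{L^p(U)}` (as an extended real). -/
def sobNorm (n : ℕ) (p : ℝ≥0∞) (U : Set (Euc d)) (f : Euc d → ℝ) : ℝ≥0∞ :=
  ∑' α : {α : Fin d → ℕ // mdeg α ≤ n}, eLpNorm (weakDeriv U α.1 f) p (volume.restrict U)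

/-- `|∇^n f|(x) = ∑_{|α| = n} |D^α f(x)|`, using weak derivatives on `U`. -/
def gradAbs (n : ℕ) (U : Set (Euc d)) (f : Euc d → ℝ) (x : Euc d) : ℝ :=
  ∑' α : {α : Fin d → ℕ // mdeg α = n}, |weakDeriv U α.1 f x|

/-- An axis-parallel cube, given by its center and side length. -/
structure Cube (d : ℕ) where
  center : Euc d
  side : ℝ

/-- The (closed) cube as a subset of `ℝ^d`. -/
def Cube.set (Q : Cube d) : Set (Euc d) := {y | ∀ i, |y i - Q.center i| ≤ Q.side / 2}

/-- The concentric dilation `rQ` of a cube. -/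
def Cube.dil (Q : Cube d) (r : ℝ) : Cube d := ⟨Q.center, r * Q.side⟩

/-- A dyadic cube of the standard dyadic grid. -/
def Cube.IsDyadic (Q : Cube d) : Prop :=
  ∃ k : ℤ, Q.side = (2 : ℝ) ^ (-k) ∧ ∀ i, ∃ m : ℤ, Q.center i = ((m : ℝ) + 1 / 2) * Q.side

/-- Distance between two sets. -/
def sdist (A B : Set (Euc d)) : ℝ := sInf ((fun q : Euc d × Euc d => dist q.1 q.2) '' (A ×ˢ B))

/-- The long distance `D(Q,S) = ℓ(Q) + ℓ(S) + dist(Q,S)`. -/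
def longDist (Q S : Cube d) : ℝ := Q.side + S.side + sdist Q.set S.set

/-- A Whitney covering of `Ω` with Whitney constant `Cw`: dyadic cubes with pairwise
disjoint interiors covering `Ω`, side length comparable to the distance to `∂Ω`,
neighbor cubes of comparable size, and finite superposition of the dilated cubes `10Q`. -/
structure WhitneyCovering (d : ℕ) (Cw : ℝ) (Ω : Set (Euc d)) where
  cubes : Set (Cube d)
  dyadic : ∀ Q ∈ cubes, Q.IsDyadic
  disj : cubes.Pairwise fun Q S => Disjoint (interior Q.set) (interior S.set)
  covers : ⋃ Q ∈ cubes, Q.set = Ω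
  Cw_pos : 0 < Cw
  dist_le : ∀ Q ∈ cubes, Cw * Q.side ≤ sdist Q.set (frontier Ω)
  le_dist : ∀ Q ∈ cubes, sdist Q.set (frontier Ω) ≤ 4 * Cw * Q.side
  neighbor : ∀ Q ∈ cubes, ∀ S ∈ cubes, (Q.set ∩ S.set).Nonempty → Q.side ≤ 2 * S.side
  finite_overlap : ∃ N : ℕ, ∀ x : Euc d,
    {Q | Q ∈ cubes ∧ x ∈ (Q.dil 10).set}.Finite ∧
    {Q | Q ∈ cubes ∧ x ∈ (Q.dil 10).set}.ncard ≤ N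

/-- A choice of a Whitney cube containing `x` (junk degenerate cube if there is none). -/
def cubeAt {Cw : ℝ} {Ω : Set (Euc d)} (𝒲 : WhitneyCovering d Cw Ω) (x : Euc d) : Cube d :=
  if h : ∃ Q ∈ 𝒲.cubes, x ∈ Q.set then h.choose else ⟨x, 0⟩

/-- An oriented Whitney covering: a Whitney covering together with a fixed central (root)
cube `Q₀` and a chain function assigning to each pair of cubes a chain of consecutive
neighboring Whitney cubes joining them. -/
structure OrientedWhitney (d : ℕ) (Cw : ℝ) (Ω : Set (Euc d)) extends
    WhitneyCovering d Cw Ω where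
  root : Cube d
  root_mem : root ∈ cubes
  chain : Cube d → Cube d → List (Cube d)
  chain_mem : ∀ Q ∈ cubes, ∀ S ∈ cubes, ∀ P ∈ chain Q S, P ∈ cubes
  chain_head : ∀ Q ∈ cubes, ∀ S ∈ cubes, (chain Q S).head? = some Q
  chain_last : ∀ Q ∈ cubes, ∀ S ∈ cubes, (chain Q S).getLast? = some S
  chain_adj : ∀ Q ∈ cubes, ∀ S ∈ cubes,
    (chain Q S).Chain' fun P P' => P ≠ P' ∧ (P.set ∩ P'.set).Nonempty

/-- The tree-like order on Whitney cubes: `S ≤ Q` iff `Q` lies on the chain `[S, Q₀]`. -/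
def OrientedWhitney.cle {Cw : ℝ} {Ω : Set (Euc d)} (OW : OrientedWhitney d Cw Ω)
    (S Q : Cube d) : Prop := Q ∈ OW.chain S OW.root

/-- The (uncentered) Hardy–Littlewood maximal function over cubes. -/
def maxFn (g : Euc d → ℝ) (x : Euc d) : ℝ≥0∞ :=
  ⨆ (Q : Cube d) (_ : x ∈ Q.set) (_ : 0 < Q.side),
    (∫⁻ y in Q.set, ENNReal.ofReal (g y)) / ENNReal.ofReal (Q.side ^ d)

/-- A smooth convolution Calderón–Zygmund kernel of order `n`:
`|∇^j K(x)| ≤ C_K / |x|^{d+j}` for `0 ≤ j ≤ n` and `x ≠ 0`. -/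
def IsCZKernel (d n : ℕ) (K : Euc d → ℝ) : Prop :=
  ContDiffOn ℝ n K {x : Euc d | x ≠ 0} ∧
  ∃ C : ℝ, 0 < C ∧ ∀ j : ℕ, j ≤ n → ∀ x : Euc d, x ≠ 0 →
    ‖iteratedFDerivWithin ℝ j K {x : Euc d | x ≠ 0} x‖ ≤ C / ‖x‖ ^ (d + j)

/-- A smooth convolution Calderón–Zygmund operator of order `n`: it has a smooth
convolution CZ kernel of order `n`, is bounded on `L^p(ℝ^d)` for every `1 < p < ∞`,
and is represented by its kernel off the support. -/
structure CZO (d n : ℕ) where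
  toFun : (Euc d → ℝ) → Euc d → ℝ
  kernel : Euc d → ℝ
  kernel_prop : IsCZKernel d n kernel
  bounded : ∀ p : ℝ, 1 < p → ∃ C : ℝ≥0∞, ∀ f : Euc d → ℝ,
    MemLp f (ENNReal.ofReal p) volume →
      MemLp (toFun f) (ENNReal.ofReal p) volume ∧
      eLpNorm (toFun f) (ENNReal.ofReal p) volume ≤ C * eLpNorm f (ENNReal.ofReal p) volume
  repr : ∀ p : ℝ, 1 < p → ∀ f : Euc d → ℝ, MemLp f (ENNReal.ofReal p) volume →
    ∀ x ∉ tsupport f, toFun f x = ∫ y in tsupport f, kernel (x - y) * f y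

/-- The truncated operator `T_Ω f = χ_Ω T(χ_Ω f)`. -/
def trunc {n : ℕ} (Ω : Set (Euc d)) (T : CZO d n) (f : Euc d → ℝ) : Euc d → ℝ :=
  Ω.indicator (T.toFun (Ω.indicator f))

/-- An operator `A` is bounded on the Sobolev space `W^{n,p}(Ω)`. -/
def BddOnSobolev (n : ℕ) (p : ℝ≥0∞) (Ω : Set (Euc d))
    (A : (Euc d → ℝ) → Euc d → ℝ) : Prop :=
  ∃ C : ℝ≥0∞, ∀ f, MemSobolev n p Ω f →
    MemSobolev n p Ω (A f) ∧ sobNorm n p Ω (A f) ≤ C * sobNorm n p Ω f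

/-- `P` is a polynomial of degree at most `m` whose derivatives of order `≤ m` have the
same averages on `3Q` as those of `f`. -/
def polyFits (m : ℕ) (Q : Cube d) (f : Euc d → ℝ) (P : MvPolynomial (Fin d) ℝ) : Prop :=
  P.totalDegree ≤ m ∧ ∀ β : Fin d → ℕ, mdeg β ≤ m →
    (⨍ x in (Q.dil 3).set, mderiv β (fun y => MvPolynomial.eval y P) x) =
      ⨍ x in (Q.dil 3).set, weakDeriv (interior (Q.dil 3).set) β f x

/-- The approximating polynomial `𝐏^m_{3Q} f` (junk value `0` if it does not exist). -/
def approxPoly (m : ℕ) (Q : Cube d) (f : Euc d → ℝ) : MvPolynomial (Fin d) ℝ :=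
  if h : ∃ P, polyFits m Q f P then h.choose else 0

/-- The measure `|∇^n f(x)|^p dx` restricted to `Ω`. -/
def gradMeasure (n : ℕ) (p : ℝ) (Ω : Set (Euc d)) (f : Euc d → ℝ) : Measure (Euc d) :=
  (volume.restrict Ω).withDensity fun x => ENNReal.ofReal (gradAbs n Ω f x ^ p)

/-- The dual exponent `p' = p/(p-1)`. -/
def pconj (p : ℝ) : ℝ := p / (p - 1)

/-- The distinguished "vertical" coordinate direction. -/
def vert (d : ℕ) [NeZero d] : Fin d := ⟨d - 1, Nat.sub_lt (NeZero.pos d) one_pos⟩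

/-- The cube of side `R` centered at the origin (in local coordinates). -/
def cube0 (d : ℕ) (R : ℝ) : Set (Euc d) := {y | ∀ i, |y i| ≤ R / 2}

/-- An `R`-window of the domain `Ω`, with Lipschitz constant `δ`:
a cube of side `R` centered at a boundary point, in which (after a rotation `rot`)
`Ω` coincides with the region above the graph of a `δ`-Lipschitz function. -/
structure Window (d : ℕ) [NeZero d] (δ R : ℝ) (Ω : Set (Euc d)) where
  center : Euc d
  center_mem : center ∈ frontier Ω
  rot : Euc d ≃ₗᵢ[ℝ] Euc d
  graphFn : Euc d → ℝ
  graphFn_horiz : ∀ y z : Euc d, (∀ i, i ≠ vert d → y i = z i) → graphFn y = graphFn z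
  graphFn_lip : ∀ y z : Euc d, |graphFn y - graphFn z| ≤ δ * ‖y - z‖
  graph : (fun x => rot (x - center)) '' Ω ∩ cube0 d (2 * R) =
    {y ∈ cube0 d (2 * R) | graphFn y < y (vert d)}

variable [NeZero d]

/-- The local coordinates map of a window. -/
def Window.toLoc {δ R : ℝ} {Ω : Set (Euc d)} (W : Window d δ R Ω) : Euc d → Euc d :=
  fun x => W.rot (x - W.center)

/-- The inverse of the local coordinates map of a window. -/
def Window.fromLoc {δ R : ℝ} {Ω : Set (Euc d)} (W : Window d δ R Ω) : Euc d → Euc d :=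
  fun y => W.rot.symm y + W.center

/-- The fixed small dilation factor `δ₀`. -/
def dil0 : ℝ := 1 / 4

/-- The core `δ₀𝒬` of a window. -/
def Window.core {δ R : ℝ} {Ω : Set (Euc d)} (W : Window d δ R Ω) : Set (Euc d) :=
  W.toLoc ⁻¹' cube0 d (dil0 * R)

/-- `Ω` is a (bounded) Lipschitz domain with character `(δ, R)`. -/
def LipschitzDomain (d : ℕ) [NeZero d] (δ R : ℝ) (Ω : Set (Euc d)) : Prop :=
  IsOpen Ω ∧ IsConnected Ω ∧ Bornology.IsBounded Ω ∧ 0 < δ ∧ 0 < R ∧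
  ∀ x ∈ frontier Ω, ∃ W : Window d δ R Ω, W.center = x

/-- A special (unbounded) Lipschitz domain: the region above the graph of a
`δ`-Lipschitz function, in the vertical direction. -/
def SpecialLipschitz (d : ℕ) [NeZero d] (δ : ℝ) (Ω : Set (Euc d)) : Prop :=
  0 < δ ∧ ∃ A : Euc d → ℝ, (∀ y z : Euc d, (∀ i, i ≠ vert d → y i = z i) → A y = A z) ∧
    (∀ y z : Euc d, |A y - A z| ≤ δ * ‖y - z‖) ∧ Ω = {y | A y < y (vert d)}

/-- The shadow `Sh(x)` of a point, relative to a window cube `𝒬` and a Whitney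
covering `𝒲` (in coordinates where the vertical direction is the last one). -/
def shadowPt {Cw : ℝ} {Ω : Set (Euc d)} (𝒲 : WhitneyCovering d Cw Ω) (𝒬 : Cube d)
    (x : Euc d) : Set (Euc d) :=
  {y | y ∈ 𝒬.set ∩ Ω ∧ y (vert d) < x (vert d) ∧
    ∀ i, i ≠ vert d → |x i - y i| ≤ (cubeAt 𝒲 x).side / 2}

/-- The vertically extended shadow `S̃h(x)` of a point. -/
def shadowPtExt {Cw : ℝ} {Ω : Set (Euc d)} (𝒲 : WhitneyCovering d Cw Ω) (𝒬 : Cube d)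
    (x : Euc d) : Set (Euc d) :=
  {y | y ∈ 𝒬.set ∩ Ω ∧ y (vert d) < x (vert d) + 2 * (cubeAt 𝒲 x).side ∧
    ∀ i, i ≠ vert d → |x i - y i| ≤ (cubeAt 𝒲 x).side / 2}

/-- `F` is the father of `Q`: the neighboring Whitney cube immediately above `Q`. -/
def IsFather {Cw : ℝ} {Ω : Set (Euc d)} (𝒲 : WhitneyCovering d Cw Ω) (F Q : Cube d) : Prop :=
  F ∈ 𝒲.cubes ∧ F ≠ Q ∧ (F.set ∩ Q.set).Nonempty ∧
  ∃ y ∈ F.set, Q.center (vert d) + Q.side / 2 < y (vert d) ∧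
    ∀ i, i ≠ vert d → y i = Q.center i

/-- The tree order on Whitney cubes: `P ≤ Q` iff `Q` is an iterated father of `P`. -/
def cubeLe {Cw : ℝ} {Ω : Set (Euc d)} (𝒲 : WhitneyCovering d Cw Ω) (P Q : Cube d) : Prop :=
  Relation.ReflTransGen (fun a b => IsFather 𝒲 b a) P Q

/-- The shadow of a Whitney cube: `Sh(Q) = ⋃_{P ≤ Q} P`. -/
def cubeShadow {Cw : ℝ} {Ω : Set (Euc d)} (𝒲 : WhitneyCovering d Cw Ω) (Q : Cube d) :
    Set (Euc d) :=
  ⋃ P ∈ {P | P ∈ 𝒲.cubes ∧ cubeLe 𝒲 P Q}, P.set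

/-- The left-hand side of the continuous `p`-Carleson condition at the point `a`:
`∫_{S̃h(a)} dist(x,∂Ω)^{(d-p)(1-p')} μ(Sh(x) ∩ Sh(a))^{p'} dx / dist(x,∂Ω)^d`. -/
def carlesonLHS (p : ℝ) {Cw : ℝ} {Ω : Set (Euc d)} (𝒲 : WhitneyCovering d Cw Ω)
    (𝒬 : Cube d) (μ : Measure (Euc d)) (a : Euc d) : ℝ≥0∞ :=
  ∫⁻ x in shadowPtExt 𝒲 𝒬 a,
    ENNReal.ofReal (infDist x (frontier Ω) ^ (((d : ℝ) - p) * (1 - pconj p))) *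
      μ (shadowPt 𝒲 𝒬 x ∩ shadowPt 𝒲 𝒬 a) ^ pconj p /
      ENNReal.ofReal (infDist x (frontier Ω) ^ (d : ℝ))

/-- The window cube of side `R` centered at the origin of the local coordinates. -/
def locWindowCube (d : ℕ) (R : ℝ) : Cube d := ⟨0, R⟩

/-- `μ` is a `p`-Carleson measure for the Lipschitz domain `Ω`: it is a finite (positive
Borel) measure and, for every window and every properly oriented Whitney covering
(expressed in the local coordinates of the window), the continuous Carleson inequality
holds at every point `a ∈ δ₀𝒬 ∩ Ω`. -/
def IsCarleson (p δ R : ℝ) (Ω : Set (Euc d)) (μ : Measure (Euc d)) : Prop :=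
  IsFiniteMeasure μ ∧
  ∃ C : ℝ≥0∞, ∀ (W : Window d δ R Ω) (Cw : ℝ)
    (𝒲 : WhitneyCovering d Cw (W.toLoc '' Ω)), ∀ a ∈ W.core ∩ Ω,
      carlesonLHS p 𝒲 (locWindowCube d R) (μ.map W.toLoc) (W.toLoc a)
        ≤ C * (μ.map W.toLoc) (shadowPt 𝒲 (locWindowCube d R) (W.toLoc a))

/-- The Whitney averaging function `𝒜f(x) = ∑_Q χ_Q(x) ⨍_{3Q} f`. -/
def avgFn {Cw : ℝ} {Ω : Set (Euc d)} (𝒲 : WhitneyCovering d Cw Ω) (f : Euc d → ℝ)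
    (x : Euc d) : ℝ :=
  ⨍ y in ((cubeAt 𝒲 x).dil 3).set, f y

/-! Split the cubes `S` with `D(Q,S) > r` into dyadic shells `2^k r ≤ D(Q,S) ≤ 2^(k+1) r`.
Every cube of the `k`-th shell, and `Q` itself, lies in the cube `B_k` of side `2^(k+2) r`
concentric with `Q`. As Whitney cubes have disjoint interiors, the `k`-th shell contributes at
most `|B_k| Mg(y) / (2^k r)^(d+η) = 4^d (2^k r)^(-η) Mg(y)` for every `y ∈ Q`, and the geometric
series over `k` sums to `4^d / (1 - 2^(-η)) · r^(-η) Mg(y)`. -/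

end CZ

lemma ENNReal.le_mul_biInf {α : Type*} {s : Set α} {f : α → ℝ≥0∞} {a c : ℝ≥0∞} (hc₀ : c ≠ 0)
    (hc : c ≠ ∞) (h : ∀ y ∈ s, a ≤ c * f y) : a ≤ c * ⨅ y ∈ s, f y := by
  rw [ENNReal.mul_iInf_of_ne hc₀ hc]
  refine le_iInf fun y => ?_
  rw [ENNReal.mul_iInf_of_ne hc₀ hc]
  exact le_iInf (h y)

lemma exists_two_pow_mul_le_lt {r x : ℝ} (hr : 0 < r) (h : r ≤ x) :
    ∃ k : ℕ, 2 ^ k * r ≤ x ∧ x < 2 * (2 ^ k * r) := by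
  obtain ⟨k, hk⟩ := exists_nat_pow_near ((one_le_div hr).2 h) one_lt_two
  refine ⟨k, (le_div_iff₀ hr).1 hk.1, ?_⟩
  rw [pow_succ, div_lt_iff₀ hr] at hk
  linarith [hk.2]

lemma tsum_ofReal_div_two_pow_mul_rpow {c r η : ℝ} (hc : 0 ≤ c) (hr : 0 < r) (hη : 0 < η) :
    ∑' k : ℕ, ENNReal.ofReal (c / (2 ^ k * r) ^ η)
      = ENNReal.ofReal (c / (1 - (2 ^ η)⁻¹) / r ^ η) := by
  set q : ℝ := (2 ^ η)⁻¹
  have hq : q < 1 := inv_lt_one_of_one_lt₀ (Real.one_lt_rpow one_lt_two hη)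
  have hterm : ∀ k : ℕ, c / (2 ^ k * r) ^ η = c / r ^ η * q ^ k := fun k => by
    rw [Real.mul_rpow (by positivity) hr.le, ← Real.rpow_natCast, ← Real.rpow_mul zero_le_two,
      mul_comm (k : ℝ), Real.rpow_mul zero_le_two, Real.rpow_natCast, inv_pow]
    field_simp
  have hsum : Summable fun k : ℕ => c / r ^ η * q ^ k :=
    (summable_geometric_of_lt_one (by positivity) hq).mul_left _
  simp_rw [hterm]
  rw [← ENNReal.ofReal_tsum_of_nonneg (fun k => by positivity) hsum, tsum_mul_left,
    tsum_geometric_of_lt_one (by positivity) hq]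
  congr 1
  field_simp

namespace CZ

variable {d : ℕ}

namespace Cube

lemma set_eq_pi (Q : Cube d) :
    Q.set = univ.pi fun i => Icc (Q.center i - Q.side / 2) (Q.center i + Q.side / 2) := by
  ext x
  simp only [Cube.set, mem_pi, mem_univ, true_imp_iff, mem_Icc, abs_sub_le_iff]
  exact forall_congr' fun i => by constructor <;> intro h <;> constructor <;> linarith [h.1, h.2]

lemma isCompact_set (Q : Cube d) : IsCompact Q.set := by
  rw [set_eq_pi]
  exact isCompact_univ_pi fun _ => isCompact_Icc

lemma interior_ae_eq_set (Q : Cube d) : interior Q.set =ᵐ[volume] Q.set := by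
  refine interior_ae_eq_of_null_frontier (Convex.addHaar_frontier volume ?_)
  rw [set_eq_pi]
  exact convex_pi fun _ _ => convex_Icc _ _

lemma set_eq_closedBall {Q : Cube d} (h : 0 ≤ Q.side) :
    Q.set = closedBall Q.center (Q.side / 2) := by
  ext x
  rw [mem_closedBall, dist_pi_le_iff (by positivity)]
  simp [Cube.set, Real.dist_eq]

lemma center_mem_set {Q : Cube d} (h : 0 ≤ Q.side) : Q.center ∈ Q.set := by
  rw [set_eq_closedBall h]
  exact mem_closedBall_self (by positivity)

lemma IsDyadic.side_pos {Q : Cube d} (h : Q.IsDyadic) : 0 < Q.side := by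
  obtain ⟨k, hk, -⟩ := h
  rw [hk]
  positivity

lemma countable_setOf_isDyadic : {Q : Cube d | Q.IsDyadic}.Countable := by
  refine (countable_range fun p : ℤ × (Fin d → ℤ) =>
    (⟨fun i => ((p.2 i : ℝ) + 1 / 2) * 2 ^ (-p.1), 2 ^ (-p.1)⟩ : Cube d)).mono ?_
  rintro ⟨c, s⟩ ⟨k, rfl, hm⟩
  choose m hm using hm
  refine ⟨(k, m), ?_⟩
  simp only [Cube.mk.injEq, and_true]
  funext i
  exact (hm i).symm

end Cube

lemma exists_dist_lt_sdist_add {A B : Set (Euc d)} {a b : Euc d} (ha : a ∈ A) (hb : b ∈ B)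
    {ε : ℝ} (hε : 0 < ε) : ∃ a ∈ A, ∃ b ∈ B, dist a b < sdist A B + ε := by
  have hne : ((fun q : Euc d × Euc d => dist q.1 q.2) '' (A ×ˢ B)).Nonempty :=
    Nonempty.image _ ⟨(a, b), ha, hb⟩
  obtain ⟨-, ⟨⟨a, b⟩, ⟨ha, hb⟩, rfl⟩, hlt⟩ := Real.lt_sInf_add_pos hne hε
  exact ⟨a, ha, b, hb, hlt⟩

lemma dist_center_le_longDist {Q S : Cube d} (hQ : 0 ≤ Q.side) (hS : 0 ≤ S.side) {x : Euc d}
    (hx : x ∈ S.set) : dist x Q.center ≤ longDist Q S := by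
  refine le_of_forall_pos_le_add fun ε hε => ?_
  obtain ⟨a, ha, b, hb, hab⟩ :=
    exists_dist_lt_sdist_add (Q.center_mem_set hQ) (S.center_mem_set hS) hε
  rw [Q.set_eq_closedBall hQ, mem_closedBall] at ha
  rw [S.set_eq_closedBall hS, mem_closedBall] at hb hx
  calc dist x Q.center ≤ dist x S.center + dist b S.center + dist b a + dist a Q.center := by
        linarith [dist_triangle4 x b a Q.center, dist_triangle_right x b S.center]
    _ ≤ S.side / 2 + S.side / 2 + (sdist Q.set S.set + ε) + Q.side / 2 := by
        gcongr
        rw [dist_comm]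
        exact hab.le
    _ ≤ longDist Q S + ε := by unfold longDist; linarith

lemma side_le_longDist (Q : Cube d) {S : Cube d} (hS : 0 ≤ S.side) : Q.side ≤ longDist Q S := by
  have : 0 ≤ sdist Q.set S.set :=
    Real.sInf_nonneg <| by rintro _ ⟨_, -, rfl⟩; exact dist_nonneg
  unfold longDist
  linarith

lemma WhitneyCovering.countable_cubes {Cw : ℝ} {Ω : Set (Euc d)} (𝒲 : WhitneyCovering d Cw Ω) :
    𝒲.cubes.Countable :=
  Cube.countable_setOf_isDyadic.mono 𝒲.dyadic

lemma setLIntegral_le_maxFn_mul {B : Cube d} (hB : 0 < B.side) {y : Euc d} (hy : y ∈ B.set)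
    (g : Euc d → ℝ) :
    ∫⁻ x in B.set, ENNReal.ofReal (g x) ≤ maxFn g y * ENNReal.ofReal (B.side ^ d) :=
  (ENNReal.div_le_iff (by simpa using pow_pos hB d) ENNReal.ofReal_ne_top).1 <|
    le_iSup₂_of_le (f := fun Q (_ : y ∈ Q.set) => ⨆ (_ : 0 < Q.side),
      (∫⁻ x in Q.set, ENNReal.ofReal (g x)) / ENNReal.ofReal (Q.side ^ d)) B hy
      (le_iSup_of_le hB le_rfl)

lemma tsum_setLIntegral_le_of_pairwise_disjoint {𝒯 : Set (Cube d)} (h𝒯 : 𝒯.Countable)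
    (hdisj : 𝒯.Pairwise fun S S' => Disjoint (interior S.set) (interior S'.set))
    {B : Set (Euc d)} (hB : ∀ S ∈ 𝒯, S.set ⊆ B) (f : Euc d → ℝ≥0∞) :
    ∑' S : 𝒯, ∫⁻ x in S.1.set, f x ≤ ∫⁻ x in B, f x := by
  have := h𝒯.to_subtype
  calc ∑' S : 𝒯, ∫⁻ x in S.1.set, f x = ∑' S : 𝒯, ∫⁻ x in interior S.1.set, f x :=
        tsum_congr fun S => (setLIntegral_congr S.1.interior_ae_eq_set).symm
    _ = ∫⁻ x in ⋃ S : 𝒯, interior S.1.set, f x :=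
        (lintegral_iUnion (fun _ => isOpen_interior.measurableSet) hdisj.subtype _).symm
    _ ≤ ∫⁻ x in B, f x :=
        lintegral_mono_set (iUnion_subset fun S => interior_subset.trans (hB S.1 S.2))

lemma tsum_setLIntegral_le_maxFn_mul {𝒯 : Set (Cube d)} (h𝒯 : 𝒯.Countable)
    (hdisj : 𝒯.Pairwise fun S S' => Disjoint (interior S.set) (interior S'.set))
    (hside : ∀ S ∈ 𝒯, 0 ≤ S.side) {Q : Cube d} (hQ : 0 ≤ Q.side) {y : Euc d} (hy : y ∈ Q.set)
    {ρ : ℝ} (hρ : 0 < ρ) (hQρ : Q.side ≤ 2 * ρ) (hD : ∀ S ∈ 𝒯, longDist Q S ≤ ρ)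
    (g : Euc d → ℝ) :
    ∑' S : 𝒯, ∫⁻ x in S.1.set, ENNReal.ofReal (g x)
      ≤ maxFn g y * ENNReal.ofReal ((2 * ρ) ^ d) := by
  let B : Cube d := ⟨Q.center, 2 * ρ⟩
  have hB : B.set = closedBall Q.center ρ := by
    rw [Cube.set_eq_closedBall (by positivity)]
    exact congrArg _ (mul_div_cancel_left₀ ρ two_ne_zero)
  have hyB : y ∈ B.set := by
    rw [hB]
    rw [Q.set_eq_closedBall hQ] at hy
    exact closedBall_subset_closedBall (by linarith) hy
  have hSB : ∀ S ∈ 𝒯, S.set ⊆ B.set := fun S hS x hx => by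
    rw [hB, mem_closedBall]
    exact (dist_center_le_longDist hQ (hside S hS) hx).trans (hD S hS)
  exact (tsum_setLIntegral_le_of_pairwise_disjoint h𝒯 hdisj hSB _).trans
    (setLIntegral_le_maxFn_mul (B := B) (by positivity) hyB g)

lemma tsum_setIntegral_div_longDist_rpow_le {𝒯 : Set (Cube d)} (h𝒯 : 𝒯.Countable)
    (hdisj : 𝒯.Pairwise fun S S' => Disjoint (interior S.set) (interior S'.set))
    (hside : ∀ S ∈ 𝒯, 0 ≤ S.side) {g : Euc d → ℝ} (hg : LocallyIntegrable g volume)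
    (hg₀ : ∀ x, 0 ≤ g x) {Q : Cube d} (hQ : 0 ≤ Q.side) {y : Euc d} (hy : y ∈ Q.set)
    {ℓ η : ℝ} (hℓ : 0 < ℓ) (hη : 0 ≤ η)
    (hshell : ∀ S ∈ 𝒯, ℓ ≤ longDist Q S ∧ longDist Q S ≤ 2 * ℓ) :
    ∑' S : 𝒯, ENNReal.ofReal (∫ x in S.1.set, g x) /
        ENNReal.ofReal (longDist Q S.1 ^ ((d : ℝ) + η))
      ≤ ENNReal.ofReal (4 ^ d / ℓ ^ η) * maxFn g y := by
  rcases 𝒯.eq_empty_or_nonempty with rfl | ⟨S₀, hS₀⟩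
  · simp
  have hQℓ : Q.side ≤ 2 * ℓ := (side_le_longDist Q (hside S₀ hS₀)).trans (hshell S₀ hS₀).2
  have hterm : ∀ S : 𝒯, ENNReal.ofReal (∫ x in S.1.set, g x) /
      ENNReal.ofReal (longDist Q S.1 ^ ((d : ℝ) + η))
        ≤ (∫⁻ x in S.1.set, ENNReal.ofReal (g x)) * (ENNReal.ofReal (ℓ ^ ((d : ℝ) + η)))⁻¹ :=
    fun S => by
      rw [ofReal_integral_eq_lintegral_ofReal (hg.integrableOn_isCompact S.1.isCompact_set)
        (ae_of_all _ hg₀), div_eq_mul_inv]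
      gcongr
      exact (hshell S.1 S.2).1
  have hconst : (2 * (2 * ℓ)) ^ d / ℓ ^ ((d : ℝ) + η) = 4 ^ d / ℓ ^ η := by
    rw [Real.rpow_add hℓ, Real.rpow_natCast]
    field_simp
    ring
  calc _ ≤ ∑' S : 𝒯, (∫⁻ x in S.1.set, ENNReal.ofReal (g x)) *
          (ENNReal.ofReal (ℓ ^ ((d : ℝ) + η)))⁻¹ := ENNReal.tsum_le_tsum hterm
    _ = (∑' S : 𝒯, ∫⁻ x in S.1.set, ENNReal.ofReal (g x)) *
          (ENNReal.ofReal (ℓ ^ ((d : ℝ) + η)))⁻¹ := ENNReal.tsum_mul_right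
    _ ≤ maxFn g y * ENNReal.ofReal ((2 * (2 * ℓ)) ^ d) *
          (ENNReal.ofReal (ℓ ^ ((d : ℝ) + η)))⁻¹ := by
        gcongr
        exact tsum_setLIntegral_le_maxFn_mul h𝒯 hdisj hside hQ hy (by positivity) (by linarith)
          (fun S hS => (hshell S hS).2) g
    _ = ENNReal.ofReal (4 ^ d / ℓ ^ η) * maxFn g y := by
        rw [mul_assoc, ← ENNReal.ofReal_inv_of_pos (by positivity),
          ← ENNReal.ofReal_mul (by positivity), ← div_eq_mul_inv, hconst, mul_comm]

/-- Lemma 3.1 (1): for a Whitney covering `𝒲` of a domain `Ω ⊂ ℝ^d`,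
a nonnegative `g ∈ L^1_loc`, `r > 0` and `η > 0`, for every `Q ∈ 𝒲`,
`∑_{S : D(Q,S) > r} (∫_S g) / D(Q,S)^{d+η} ≤ C r^{-η} inf_{y∈Q} Mg(y)`,
with `C` depending only on `d` and `η`. -/
theorem statement5 {d : ℕ} (η : ℝ) (hη : 0 < η) :
    ∃ C : ℝ, 0 < C ∧ ∀ (Ω : Set (Euc d)), IsOpen Ω → IsConnected Ω →
      ∀ (Cw : ℝ) (𝒲 : WhitneyCovering d Cw Ω) (g : Euc d → ℝ),
        LocallyIntegrable g volume → (∀ x, 0 ≤ g x) →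
        ∀ r : ℝ, 0 < r → ∀ Q ∈ 𝒲.cubes,
          (∑' S : {S : Cube d // S ∈ 𝒲.cubes ∧ r < longDist Q S},
              ENNReal.ofReal (∫ x in (S.1 : Cube d).set, g x) /
                ENNReal.ofReal (longDist Q S.1 ^ ((d : ℝ) + η)))
            ≤ ENNReal.ofReal (C / r ^ η) * ⨅ y ∈ Q.set, maxFn g y := by
  have hq : ((2 : ℝ) ^ η)⁻¹ < 1 := inv_lt_one_of_one_lt₀ (Real.one_lt_rpow one_lt_two hη)
  have hC : (0 : ℝ) < 4 ^ d / (1 - (2 ^ η)⁻¹) := div_pos (by positivity) (sub_pos.2 hq)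
  refine ⟨_, hC, ?_⟩
  intro Ω _ _ Cw 𝒲 g hg hg₀ r hr Q hQ
  have hside : ∀ S ∈ 𝒲.cubes, 0 ≤ S.side := fun S hS => (𝒲.dyadic S hS).side_pos.le
  let shell (k : ℕ) : Set (Cube d) :=
    {S | S ∈ 𝒲.cubes ∧ 2 ^ k * r ≤ longDist Q S ∧ longDist Q S ≤ 2 * (2 ^ k * r)}
  have hcover : {S | S ∈ 𝒲.cubes ∧ r < longDist Q S} ⊆ ⋃ k, shell k := fun S ⟨hS, hrS⟩ => by
    obtain ⟨k, hk⟩ := exists_two_pow_mul_le_lt hr hrS.le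
    exact mem_iUnion.2 ⟨k, hS, hk.1, hk.2.le⟩
  let F (S : Cube d) : ℝ≥0∞ :=
    ENNReal.ofReal (∫ x in S.set, g x) / ENNReal.ofReal (longDist Q S ^ ((d : ℝ) + η))
  refine ENNReal.le_mul_biInf (ENNReal.ofReal_pos.2 (by positivity)).ne'
    ENNReal.ofReal_ne_top fun y hy => ?_
  calc _ ≤ ∑' S : ⋃ k, shell k, F S := ENNReal.tsum_mono_subtype F hcover
    _ ≤ ∑' k, ∑' S : shell k, F S := ENNReal.tsum_iUnion_le_tsum F shell
    _ ≤ ∑' k : ℕ, ENNReal.ofReal (4 ^ d / (2 ^ k * r) ^ η) * maxFn g y :=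
        ENNReal.tsum_le_tsum fun k => tsum_setIntegral_div_longDist_rpow_le
          (𝒲.countable_cubes.mono fun S hS => hS.1) (𝒲.disj.mono fun S hS => hS.1)
          (fun S hS => hside S hS.1) hg hg₀ (hside Q hQ) hy (by positivity) hη.le
          fun S hS => hS.2
    _ = _ := by
        rw [ENNReal.tsum_mul_right, tsum_ofReal_div_two_pow_mul_rpow (by positivity) hr hη]

end CZ
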